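/- arXiv:2208.06932 — 6 statements merged into one kernel-verified Lean document; each statement's English description precedes it below -/
import Mathlib

section
/- For a prime p, the quantity (-1)^{p-1}(p-1)! + ∑_{j=1}^{⌊p/2⌋} binom(p,j) · (-1)^{j-1}(j-1)! · (-1)^{p-j-1}(p-j-1)!, computed in F_p, equals (-1)^p (p-1)! · ∑_{j=2}^{p-1} j^{-1}, and hence equals -1 in F_p (so in particular it is nonzero in F_p). -/
open Finset

lemma sum_univ_zmod_zero {p : ℕ} [Fact p.Prime] (hodd : Odd p) :
    ∑ x : ZMod p, x = 0 := by
  have h : ∑ x : ZMod p, x = -∑ x : ZMod p, x := by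
    rw [← Finset.sum_neg_distrib]
    exact Fintype.sum_equiv (Equiv.neg (ZMod p)) _ _ (fun x => by simp)
  have h2 : (2 : ZMod p) ≠ 0 := by
    intro hh
    have : p ∣ 2 := by
      have := (ZMod.natCast_eq_zero_iff 2 p).mp (by exact_mod_cast hh)
      exact this
    have hp2 : p = 2 := ((Nat.prime_dvd_prime_iff_eq Fact.out Nat.prime_two).mp this)
    rw [hp2] at hodd
    simp [Nat.odd_iff] at hodd
  have : (2 : ZMod p) * ∑ x : ZMod p, x = 0 := by
    rw [two_mul]; linear_combination h
  exact (mul_eq_zero.mp this).resolve_left h2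

lemma sum_inv_Icc {p : ℕ} [Fact p.Prime] (hodd : Odd p) :
    ∑ j ∈ Finset.Icc 2 (p - 1), ((j : ZMod p))⁻¹ = -1 := by
  have hp : p.Prime := Fact.out
  have h2p : 2 ≤ p := hp.two_le
  have hinv : ∑ x : ZMod p, x⁻¹ = ∑ x : ZMod p, x := by
    apply Fintype.sum_equiv (Equiv.inv (ZMod p))
    intro x; simp [Equiv.inv]
  have hbij : ∑ j ∈ Finset.range p, ((j : ZMod p))⁻¹ = ∑ x : ZMod p, x⁻¹ := by
    apply Finset.sum_nbij' (i := fun j : ℕ => (j : ZMod p)) (j := fun x : ZMod p => x.val)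
    · intro a _; exact Finset.mem_univ _
    · intro x _; exact Finset.mem_range.mpr (ZMod.val_lt x)
    · intro a ha; exact ZMod.val_cast_of_lt (Finset.mem_range.mp ha)
    · intro x _; exact ZMod.natCast_rightInverse x
    · intro a _; rfl
  have hrange : ∑ j ∈ Finset.range p, ((j : ZMod p))⁻¹ = 0 := by
    rw [hbij, hinv, sum_univ_zmod_zero hodd]
  have hsplit : Finset.range p = insert 0 (Finset.Icc 1 (p - 1)) := by
    ext j
    simp [Finset.mem_range, Nat.lt_iff_le_pred (by omega : 0 < p)]
    omega
  have hsplit2 : Finset.Icc 1 (p - 1) = insert 1 (Finset.Icc 2 (p - 1)) := by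
    ext j; simp; omega
  rw [hsplit, Finset.sum_insert (by simp), hsplit2,
    Finset.sum_insert (by simp)] at hrange
  simp at hrange
  linear_combination hrange

/-- For an odd prime p, in F_p:
(-1)^(p-1)(p-1)! + ∑_{j=1}^{⌊p/2⌋} C(p,j)·(-1)^(j-1)(j-1)!·(-1)^(p-j-1)(p-j-1)!
equals (-1)^p (p-1)! · ∑_{j=2}^{p-1} j⁻¹, and hence equals -1. -/
theorem stmt3 {p : ℕ} (hp : p.Prime) (hodd : Odd p) :
    ((-1 : ZMod p) ^ (p - 1) * (Nat.factorial (p - 1) : ZMod p) +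
        ∑ j ∈ Finset.Icc 1 (p / 2), (p.choose j : ZMod p) *
          ((-1 : ZMod p) ^ (j - 1) * (Nat.factorial (j - 1) : ZMod p)) *
          ((-1 : ZMod p) ^ (p - j - 1) * (Nat.factorial (p - j - 1) : ZMod p))
      = (-1 : ZMod p) ^ p * (Nat.factorial (p - 1) : ZMod p) *
          ∑ j ∈ Finset.Icc 2 (p - 1), ((j : ZMod p))⁻¹) ∧
    ((-1 : ZMod p) ^ (p - 1) * (Nat.factorial (p - 1) : ZMod p) +
        ∑ j ∈ Finset.Icc 1 (p / 2), (p.choose j : ZMod p) *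
          ((-1 : ZMod p) ^ (j - 1) * (Nat.factorial (j - 1) : ZMod p)) *
          ((-1 : ZMod p) ^ (p - j - 1) * (Nat.factorial (p - j - 1) : ZMod p))
      = -1) := by
  haveI : Fact p.Prime := ⟨hp⟩
  have h2p : 2 ≤ p := hp.two_le
  have hsum0 : ∑ j ∈ Finset.Icc 1 (p / 2), (p.choose j : ZMod p) *
          ((-1 : ZMod p) ^ (j - 1) * (Nat.factorial (j - 1) : ZMod p)) *
          ((-1 : ZMod p) ^ (p - j - 1) * (Nat.factorial (p - j - 1) : ZMod p)) = 0 := by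
    apply Finset.sum_eq_zero
    intro j hj
    simp only [Finset.mem_Icc] at hj
    have hc : (p.choose j : ZMod p) = 0 := by
      rw [ZMod.natCast_eq_zero_iff]
      exact hp.dvd_choose_self (by omega) (by omega)
    rw [hc]; ring
  have hw : ((p - 1).factorial : ZMod p) = -1 := ZMod.wilsons_lemma p
  have he : (-1 : ZMod p) ^ (p - 1) = 1 :=
    Even.neg_one_pow (Nat.Odd.sub_odd hodd odd_one)
  have hop : (-1 : ZMod p) ^ p = -1 := Odd.neg_one_pow hodd
  rw [hsum0, hw, he, hop, sum_inv_Icc hodd]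
  constructor <;> ring
end

section
/- Let A be a finite set, F a field, k ≥ 1, f : Π_k → F, and define the partition indicator I_f : A^k → F by I_f(x_1,...,x_k) = ∑_{τ < 1̂} (∑_{π ≤ τ} f(π)·μ(π,τ)) · δ_τ(x_1,...,x_k). Then: (a) if x_1 = x_2 = ... = x_k, then I_f(x_1,...,x_k) = -∑_{π < 1̂} f(π)·μ(π,1̂); (b) if (x_1,...,x_k) has partition π ≠ 1̂ (i.e., π is the coarsest partition τ with δ_τ(x_1,...,x_k)=1), then I_f(x_1,...,x_k) = f(π). -/
open scoped Classical
open Finset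

noncomputable instance setoidFintype {k : ℕ} : Fintype (Setoid (Fin k)) :=
  Fintype.ofInjective (fun s : Setoid (Fin k) => s.r)
    (fun a b h => by cases a; cases b; cases h; rfl)

/-- δ_π : indicator that the coordinates of `x` within each block of the
partition `π` are equal, i.e. that `π` refines the kernel partition of `x`. -/
noncomputable def deltaFn {k : ℕ} {A : Type*} (F : Type*) [Zero F] [One F]
    (π : Setoid (Fin k)) (x : Fin k → A) : F :=
  if π ≤ Setoid.ker x then 1 else 0

/-- The partition indicator I_f associated to `f : Π_k → F` and the Möbius
function `μ` of the partition lattice: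
I_f(x) = ∑_{τ < ⊤} (∑_π f(π)·μ(π,τ)) · δ_τ(x). -/
noncomputable def partInd {k : ℕ} {A F : Type*} [CommRing F]
    (μ : Setoid (Fin k) → Setoid (Fin k) → F) (f : Setoid (Fin k) → F)
    (x : Fin k → A) : F :=
  ∑ τ ∈ univ.filter (fun τ : Setoid (Fin k) => τ < ⊤),
    (∑ π : Setoid (Fin k), f π * μ π τ) * deltaFn F τ x

/-- Values of the partition indicator: (a) on constant tuples (kernel partition ⊤)
it equals -∑_{π<⊤} f(π)μ(π,⊤); (b) on a tuple whose (coarsest) partition, namely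
`Setoid.ker x`, is π ≠ ⊤, it equals f(π). -/
theorem stmt4 {k : ℕ} (hk : 0 < k) {A F : Type*} [Fintype A] [Field F]
    (μ : Setoid (Fin k) → Setoid (Fin k) → F)
    (hrefl : ∀ x, μ x x = 1)
    (hzero : ∀ x y, ¬ x ≤ y → μ x y = 0)
    (hsum : ∀ x y : Setoid (Fin k), x < y →
      ∑ z ∈ univ.filter (fun z => x ≤ z ∧ z ≤ y), μ x z = 0)
    (f : Setoid (Fin k) → F) :
    (∀ x : Fin k → A, Setoid.ker x = ⊤ →
      partInd μ f x =
        -∑ π ∈ univ.filter (fun π : Setoid (Fin k) => π < ⊤), f π * μ π ⊤) ∧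
    (∀ x : Fin k → A, Setoid.ker x ≠ ⊤ →
      partInd μ f x = f (Setoid.ker x)) := by

  classical
  -- Key lemma: ∑_{τ ≤ σ} μ π τ = [π = σ]
  have key : ∀ (σ π : Setoid (Fin k)),
      ∑ τ ∈ univ.filter (fun τ => τ ≤ σ), μ π τ = if π = σ then 1 else 0 := by
    intro σ π
    by_cases hπσ : π ≤ σ
    · rcases eq_or_lt_of_le hπσ with h | h
      · subst h
        rw [if_pos rfl, Finset.sum_eq_single π]
        · exact hrefl π
        · intro τ hτ hne
          exact hzero π τ (fun hle => hne (le_antisymm (mem_filter.mp hτ).2 hle))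
        · intro h; simp at h
      · rw [if_neg (ne_of_lt h), ← hsum π σ h]
        symm
        apply Finset.sum_subset
        · intro τ hτ
          simp only [mem_filter, mem_univ, true_and] at hτ ⊢
          exact hτ.2
        · intro τ hτ hτ'
          simp only [mem_filter, mem_univ, true_and] at hτ hτ'
          exact hzero π τ (fun hle => hτ' ⟨hle, hτ⟩)
    · rw [if_neg (fun h => hπσ (le_of_eq h))]
      apply Finset.sum_eq_zero
      intro τ hτ
      simp only [mem_filter, mem_univ, true_and] at hτ
      exact hzero π τ (fun hle => hπσ (le_trans hle hτ))
  constructor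
  · -- case (a)
    intro x hx
    unfold partInd deltaFn
    rw [hx]
    have h1 : ∀ τ ∈ univ.filter (fun τ : Setoid (Fin k) => τ < ⊤),
        (∑ π : Setoid (Fin k), f π * μ π τ) * (if τ ≤ (⊤ : Setoid (Fin k)) then (1:F) else 0)
        = ∑ π : Setoid (Fin k), f π * μ π τ := by
      intro τ _; rw [if_pos le_top, mul_one]
    rw [Finset.sum_congr rfl h1, Finset.sum_comm]
    have h2 : ∀ π : Setoid (Fin k),
        ∑ τ ∈ univ.filter (fun τ : Setoid (Fin k) => τ < ⊤), μ π τ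
        = (if π = ⊤ then 1 else 0) - μ π ⊤ := by
      intro π
      have htop : ∑ τ ∈ univ.filter (fun τ : Setoid (Fin k) => τ ≤ ⊤), μ π τ
          = if π = ⊤ then 1 else 0 := key ⊤ π
      have hsplit : (univ.filter (fun τ : Setoid (Fin k) => τ ≤ ⊤))
          = insert ⊤ (univ.filter (fun τ : Setoid (Fin k) => τ < ⊤)) := by
        ext τ
        simp only [mem_filter, mem_univ, true_and, mem_insert]
        constructor
        · intro h; rcases eq_or_lt_of_le h with h | h
          · exact Or.inl h
          · exact Or.inr h
        · intro h; rcases h with h | h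
          · exact h ▸ le_refl _
          · exact le_of_lt h
      rw [hsplit, Finset.sum_insert (by simp)] at htop
      rw [eq_sub_iff_add_eq, add_comm]
      exact htop
    calc ∑ π : Setoid (Fin k), ∑ τ ∈ univ.filter (fun τ : Setoid (Fin k) => τ < ⊤),
            f π * μ π τ
        = ∑ π : Setoid (Fin k), f π * ((if π = ⊤ then 1 else 0) - μ π ⊤) := by
          refine Finset.sum_congr rfl fun π _ => ?_
          rw [← Finset.mul_sum, h2 π]
      _ = ∑ π : Setoid (Fin k), (if π = ⊤ then f π * (1 - μ π ⊤) else f π * (- μ π ⊤)) := by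
          refine Finset.sum_congr rfl fun π _ => ?_
          by_cases h : π = ⊤ <;> simp [h]
      _ = -∑ π ∈ univ.filter (fun π : Setoid (Fin k) => π < ⊤), f π * μ π ⊤ := by
          have e1 : univ.filter (fun π : Setoid (Fin k) => π = ⊤) = {⊤} := by
            ext π; simp
          have e2 : univ.filter (fun π : Setoid (Fin k) => ¬ π = ⊤)
              = univ.filter (fun π : Setoid (Fin k) => π < ⊤) := by
            ext π
            simp only [mem_filter, mem_univ, true_and]
            exact ⟨fun h => lt_of_le_of_ne le_top h, fun h => ne_of_lt h⟩
          rw [Finset.sum_ite, e1, e2, Finset.sum_singleton, hrefl, sub_self, mul_zero,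
            zero_add, ← Finset.sum_neg_distrib]
          exact Finset.sum_congr rfl (fun π _ => by ring)
  · -- case (b)
    intro x hx
    set σ := Setoid.ker x with hσ
    have hσtop : σ < ⊤ := lt_of_le_of_ne le_top hx
    unfold partInd deltaFn
    have step1 : ∑ τ ∈ univ.filter (fun τ : Setoid (Fin k) => τ < ⊤),
        (∑ π : Setoid (Fin k), f π * μ π τ) * (if τ ≤ σ then (1:F) else 0)
        = ∑ τ ∈ univ.filter (fun τ : Setoid (Fin k) => τ ≤ σ),
            ∑ π : Setoid (Fin k), f π * μ π τ := by
      symm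
      apply Finset.sum_subset_zero_on_sdiff
      · intro τ hτ
        simp only [mem_filter, mem_univ, true_and] at hτ ⊢
        exact lt_of_le_of_lt hτ hσtop
      · intro τ hτ
        simp only [mem_sdiff, mem_filter, mem_univ, true_and] at hτ
        rw [if_neg hτ.2, mul_zero]
      · intro τ hτ
        simp only [mem_filter, mem_univ, true_and] at hτ
        rw [if_pos hτ, mul_one]
    rw [step1, Finset.sum_comm]
    calc ∑ π : Setoid (Fin k), ∑ τ ∈ univ.filter (fun τ : Setoid (Fin k) => τ ≤ σ),
            f π * μ π τ
        = ∑ π : Setoid (Fin k), f π * (if π = σ then 1 else 0) := by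
          refine Finset.sum_congr rfl fun π _ => ?_
          rw [← Finset.mul_sum, key σ π]
      _ = f σ := by
          rw [Finset.sum_congr rfl (fun π _ => by rw [mul_ite, mul_one, mul_zero]),
            Finset.sum_ite_eq' univ σ f, if_pos (mem_univ σ)]
end

section
/- Let A be a finite set, F a field, k ≥ 1, and f : Π_k → F with f(0̂) = 1 and f(π) = 0 for all π ≠ 0̂. Then the partition indicator I_f satisfies: I_f(x_1,...,x_k) = 1 if x_1,...,x_k are pairwise distinct, I_f(x_1,...,x_k) = (-1)^k (k-1)! if x_1 = ... = x_k, and I_f(x_1,...,x_k) = 0 otherwise. -/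
/-
The Möbius function `μ(0̂, ·)` of the partition lattice is realised by permutations: `μ(0̂, τ)`
is the signed number of permutations whose cycle partition is `τ`. Indeed, this count sums to
zero over the partitions below any `τ ≠ 0̂`, since multiplying by a transposition inside a block
of `τ` is a sign-reversing involution. The cyclic permutations of a `k`-set all have sign
`(-1)^(k-1)` and there are `(k-1)!` of them, so `μ(0̂, 1̂) = (-1)^(k-1) (k-1)!`.

For `f = δ_{0̂}` the indicator reduces to `I_f(x) = ∑_{τ < 1̂, τ ≤ ker x} μ(0̂, τ)`. When
`ker x < 1̂` this is `∑_{τ ≤ ker x} μ(0̂, τ)`, which is `1` or `0` according to whether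
`ker x = 0̂`; when `ker x = 1̂` it is `-μ(0̂, 1̂)`.
-/

open scoped Classical
open Finset

theorem Finset.eq_of_forall_sum_filter_le_eq {β M : Type*} [Fintype β] [PartialOrder β]
    [AddCommGroup M] {g h : β → M}
    (H : ∀ b, ∑ z ∈ univ.filter (· ≤ b), g z = ∑ z ∈ univ.filter (· ≤ b), h z) : g = h := by
  funext b
  induction b using WellFoundedLT.induction with
  | _ b ih =>
    have hb : b ∈ univ.filter (· ≤ b) := by simp
    have hlower : ∑ z ∈ (univ.filter (· ≤ b)).erase b, g z
        = ∑ z ∈ (univ.filter (· ≤ b)).erase b, h z :=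
      sum_congr rfl fun z hz => ih z <| by
        simp only [mem_erase, mem_filter, mem_univ, true_and] at hz
        exact lt_of_le_of_ne hz.2 hz.1
    have := H b
    rw [← add_sum_erase _ _ hb, ← add_sum_erase _ _ hb, hlower] at this
    exact add_right_cancel this

theorem sum_filter_le_mobius_bot {β F : Type*} [Fintype β] [PartialOrder β] [OrderBot β]
    [AddCommMonoidWithOne F] {μ : β → β → F} (hrefl : ∀ x, μ x x = 1)
    (hsum : ∀ x y : β, x < y → ∑ z ∈ univ.filter (fun z => x ≤ z ∧ z ≤ y), μ x z = 0)
    (τ : β) : ∑ z ∈ univ.filter (· ≤ τ), μ ⊥ z = if τ = ⊥ then 1 else 0 := by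
  split_ifs with hτ
  · subst hτ
    have : univ.filter (· ≤ (⊥ : β)) = {⊥} := by ext; simp
    rw [this, sum_singleton, hrefl]
  · simpa only [bot_le, true_and] using hsum ⊥ τ (bot_lt_iff_ne_bot.mpr hτ)

instance Setoid.nontrivial {α : Type*} [Nontrivial α] : Nontrivial (Setoid α) := by
  obtain ⟨a, b, hab⟩ := exists_pair_ne α
  exact ⟨⊥, ⊤, fun h => hab (by simpa [Setoid.bot_def] using Setoid.eq_top_iff.mp h a b)⟩

theorem sum_filter_lt_top_mobius_bot {β F : Type*} [Fintype β] [PartialOrder β] [BoundedOrder β]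
    [Nontrivial β] [AddCommGroupWithOne F] {μ : β → β → F} (hrefl : ∀ x, μ x x = 1)
    (hsum : ∀ x y : β, x < y → ∑ z ∈ univ.filter (fun z => x ≤ z ∧ z ≤ y), μ x z = 0) :
    ∑ z ∈ univ.filter (· < ⊤), μ ⊥ z = -μ ⊥ ⊤ := by
  have h := sum_filter_le_mobius_bot hrefl hsum ⊤
  have herase : (univ.filter (· ≤ (⊤ : β))).erase ⊤ = univ.filter (· < ⊤) := by
    ext; simp [lt_top_iff_ne_top, and_comm]
  rw [if_neg top_ne_bot, ← add_sum_erase _ _ (by simp), herase] at h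
  exact eq_neg_of_add_eq_zero_right h

namespace Equiv.Perm

variable {α : Type*}

theorem sameCycle_setoid_le_iff [Finite α] {τ : Setoid α} {f : Perm α} :
    SameCycle.setoid f ≤ τ ↔ ∀ a, τ a (f a) := by
  refine ⟨fun h a => Setoid.le_def.mp h (⟨1, by simp⟩ : SameCycle f a (f a)), fun h => ?_⟩
  have hpow : ∀ x (n : ℕ), τ x ((f ^ n) x) := fun x n => by
    induction n with
    | zero => exact τ.refl' x
    | succ n ih => exact τ.trans' ih (by rw [pow_succ', mul_apply]; exact h _)
  refine Setoid.le_def.mpr fun {x y} hxy => ?_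
  obtain ⟨n, rfl⟩ := (hxy : SameCycle f x y).exists_nat_pow_eq
  exact hpow x n

theorem sameCycle_setoid_eq_bot_iff [Finite α] {f : Perm α} : SameCycle.setoid f = ⊥ ↔ f = 1 := by
  rw [← le_bot_iff, sameCycle_setoid_le_iff, Perm.ext_iff]
  simp only [Setoid.bot_def, coe_one, id_eq, eq_comm]

variable [Fintype α]

theorem sameCycle_setoid_eq_top_iff [Nontrivial α] {f : Perm α} :
    SameCycle.setoid f = ⊤ ↔ f.cycleType = {Fintype.card α} := by
  have hcycle : SameCycle.setoid f = ⊤ ↔ f.IsCycle ∧ f.support = univ := by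
    rw [Setoid.eq_top_iff]
    constructor
    · intro h
      have hmoved : ∀ x, f x ≠ x := fun x hx =>
        (exists_ne x).choose_spec ((h x _ : SameCycle f x _).eq_of_left hx).symm
      obtain ⟨a⟩ := ‹Nontrivial α›.to_nonempty
      exact ⟨⟨a, hmoved a, fun y _ => h a y⟩,
        eq_univ_iff_forall.mpr fun x => mem_support.mpr (hmoved x)⟩
    · rintro ⟨hc, hs⟩ x y
      exact hc.sameCycle (mem_support.mp (hs ▸ mem_univ x)) (mem_support.mp (hs ▸ mem_univ y))
  rw [hcycle]
  constructor
  · rintro ⟨hc, hs⟩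
    rw [hc.cycleType, hs, card_univ]
  · intro h
    have hc : f.IsCycle := card_cycleType_eq_one.mp (by rw [h, Multiset.card_singleton])
    rw [hc.cycleType, Multiset.singleton_inj] at h
    exact ⟨hc, eq_univ_of_card _ h⟩

noncomputable def cycleSignSum (τ : Setoid α) : ℤ :=
  ∑ f ∈ univ.filter (fun f : Perm α => SameCycle.setoid f = τ), (sign f : ℤ)

theorem sum_sign_filter_sameCycle_setoid_le_eq_zero {τ : Setoid α} (hτ : τ ≠ ⊥) :
    ∑ f ∈ univ.filter (fun f : Perm α => SameCycle.setoid f ≤ τ), (sign f : ℤ) = 0 := by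
  obtain ⟨i, j, hrel, hij⟩ : ∃ i j, τ i j ∧ i ≠ j := by
    by_contra! h
    exact hτ (le_bot_iff.mp (Setoid.le_def.mpr fun {x y} hxy => h x y hxy))
  refine sum_involution (fun f _ => swap i j * f) (fun f _ => ?_) (fun f _ _ hf => ?_)
    (fun f hf => ?_) (fun f _ => swap_mul_self_mul i j f)
  · simp [sign_mul, sign_swap hij]
  · exact hij (swap_eq_one_iff.mp (mul_right_cancel (hf.trans (one_mul f).symm)))
  · simp only [mem_filter, mem_univ, true_and, sameCycle_setoid_le_iff, mul_apply] at hf ⊢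
    intro a
    refine τ.trans' (hf a) ?_
    rcases eq_or_ne (f a) i with h1 | h1
    · rw [h1, swap_apply_left]; exact hrel
    rcases eq_or_ne (f a) j with h2 | h2
    · rw [h2, swap_apply_right]; exact τ.symm' hrel
    · rw [swap_apply_of_ne_of_ne h1 h2]

theorem sum_filter_le_cycleSignSum [Fintype (Setoid α)] (τ : Setoid α) :
    ∑ z ∈ univ.filter (· ≤ τ), cycleSignSum z = if τ = ⊥ then 1 else 0 := by
  have hfiber : ∑ z ∈ univ.filter (· ≤ τ), cycleSignSum z
      = ∑ f ∈ univ.filter (fun f : Perm α => SameCycle.setoid f ≤ τ), (sign f : ℤ) := by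
    rw [← sum_fiberwise_of_maps_to (g := SameCycle.setoid) (t := univ.filter (· ≤ τ))
      (fun f hf => by simpa using hf)]
    refine sum_congr rfl fun z hz => ?_
    rw [cycleSignSum, filter_filter]
    congr 1
    ext f
    simp only [mem_filter, mem_univ, true_and] at hz ⊢
    exact ⟨fun h => ⟨h ▸ hz, h⟩, And.right⟩
  rw [hfiber]
  split_ifs with hτ
  · subst hτ
    have : univ.filter (fun f : Perm α => SameCycle.setoid f ≤ ⊥) = {1} := by
      ext f; simp [sameCycle_setoid_eq_bot_iff]
    rw [this, sum_singleton, sign_one, Units.val_one]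
  · exact sum_sign_filter_sameCycle_setoid_le_eq_zero hτ

theorem cycleSignSum_top [Nontrivial α] :
    cycleSignSum (⊤ : Setoid α)
      = (-1) ^ (Fintype.card α - 1) * Nat.factorial (Fintype.card α - 1) := by
  have hcard : 2 ≤ Fintype.card α := Fintype.one_lt_card
  have hsign : ∀ f ∈ univ.filter (fun f : Perm α => f.cycleType = {Fintype.card α}),
      (sign f : ℤ) = (-1) ^ (Fintype.card α - 1) := by
    intro f hf
    rw [sign_of_cycleType, (mem_filter.mp hf).2, Multiset.sum_singleton,
      Multiset.card_singleton, show Fintype.card α + 1 = Fintype.card α - 1 + 2 by omega]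
    simp [pow_add]
  simp only [cycleSignSum, sameCycle_setoid_eq_top_iff]
  rw [sum_congr rfl hsign, sum_const, card_of_cycleType_singleton hcard le_rfl,
    Nat.choose_self, nsmul_eq_mul]
  push_cast
  ring

end Equiv.Perm

open Equiv.Perm

theorem mobius_bot_eq_cycleSignSum {α F : Type*} [Fintype α] [Fintype (Setoid α)]
    [AddCommGroupWithOne F]
    {μ : Setoid α → Setoid α → F} (hrefl : ∀ x, μ x x = 1)
    (hsum : ∀ x y : Setoid α, x < y → ∑ z ∈ univ.filter (fun z => x ≤ z ∧ z ≤ y), μ x z = 0)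
    (τ : Setoid α) : μ ⊥ τ = cycleSignSum τ := by
  revert τ
  refine congrFun (Finset.eq_of_forall_sum_filter_le_eq fun τ => ?_)
  rw [sum_filter_le_mobius_bot hrefl hsum, ← Int.cast_sum, sum_filter_le_cycleSignSum]
  push_cast
  rfl

theorem partInd_indicator_bot {k : ℕ} {A F : Type*} [CommRing F]
    (μ : Setoid (Fin k) → Setoid (Fin k) → F) (x : Fin k → A) :
    partInd μ (fun π : Setoid (Fin k) => if π = ⊥ then (1 : F) else 0) x
      = ∑ τ ∈ univ.filter (fun τ => τ < ⊤ ∧ τ ≤ Setoid.ker x), μ ⊥ τ := by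
  simp only [partInd, deltaFn, ite_mul, one_mul, zero_mul, sum_ite_eq', mem_univ, if_true,
    mul_ite, mul_one, mul_zero, ← sum_filter, filter_filter]

theorem partInd_indicator_bot_of_ker_ne_top {k : ℕ} {A F : Type*} [CommRing F]
    {μ : Setoid (Fin k) → Setoid (Fin k) → F} (hrefl : ∀ x, μ x x = 1)
    (hsum : ∀ x y : Setoid (Fin k), x < y →
      ∑ z ∈ univ.filter (fun z => x ≤ z ∧ z ≤ y), μ x z = 0)
    {x : Fin k → A} (hx : Setoid.ker x ≠ ⊤) :
    partInd μ (fun π : Setoid (Fin k) => if π = ⊥ then (1 : F) else 0) x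
      = if Setoid.ker x = ⊥ then 1 else 0 := by
  rw [partInd_indicator_bot, ← sum_filter_le_mobius_bot hrefl hsum]
  congr 1
  ext τ
  simpa using fun h => lt_of_le_of_lt h hx.lt_top

theorem stmt5_general {k : ℕ} (hk : 2 ≤ k) {A F : Type*} [Field F]
    (μ : Setoid (Fin k) → Setoid (Fin k) → F)
    (hrefl : ∀ x, μ x x = 1)
    (hsum : ∀ x y : Setoid (Fin k), x < y →
      ∑ z ∈ univ.filter (fun z => x ≤ z ∧ z ≤ y), μ x z = 0) :
    (∀ x : Fin k → A, Function.Injective x →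
      partInd μ (fun π : Setoid (Fin k) => if π = ⊥ then (1 : F) else 0) x = 1) ∧
    (∀ x : Fin k → A, Setoid.ker x = ⊤ →
      partInd μ (fun π : Setoid (Fin k) => if π = ⊥ then (1 : F) else 0) x =
        (-1 : F) ^ k * (Nat.factorial (k - 1))) ∧
    (∀ x : Fin k → A, ¬ Function.Injective x → Setoid.ker x ≠ ⊤ →
      partInd μ (fun π : Setoid (Fin k) => if π = ⊥ then (1 : F) else 0) x = 0) := by
  have : Nontrivial (Fin k) := Fin.nontrivial_iff_two_le.mpr hk
  refine ⟨fun x hx => ?_, fun x hx => ?_, fun x hx hx' => ?_⟩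
  · have hker := (Setoid.injective_iff_ker_bot x).mp hx
    rw [partInd_indicator_bot_of_ker_ne_top hrefl hsum (hker ▸ bot_ne_top), if_pos hker]
  · simp only [partInd_indicator_bot, hx, le_top, and_true]
    rw [sum_filter_lt_top_mobius_bot hrefl hsum, mobius_bot_eq_cycleSignSum hrefl hsum,
      cycleSignSum_top, Fintype.card_fin, ← pow_sub_one_mul (by omega : k ≠ 0)]
    push_cast
    ring
  · rw [partInd_indicator_bot_of_ker_ne_top hrefl hsum hx',
      if_neg (mt (Setoid.injective_iff_ker_bot x).mpr hx)]

/-- For f with f(⊥)=1 and f(π)=0 otherwise, the partition indicator is the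
distinctness indicator: it is 1 on tuples of pairwise distinct elements,
(-1)^k (k-1)! on constant tuples, and 0 otherwise. -/
theorem stmt5 {k : ℕ} (hk : 2 ≤ k) {A F : Type*} [Fintype A] [Field F]
    (μ : Setoid (Fin k) → Setoid (Fin k) → F)
    (hrefl : ∀ x, μ x x = 1)
    (hzero : ∀ x y, ¬ x ≤ y → μ x y = 0)
    (hsum : ∀ x y : Setoid (Fin k), x < y →
      ∑ z ∈ univ.filter (fun z => x ≤ z ∧ z ≤ y), μ x z = 0) :
    (∀ x : Fin k → A, Function.Injective x →
      partInd μ (fun π : Setoid (Fin k) => if π = ⊥ then (1 : F) else 0) x = 1) ∧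
    (∀ x : Fin k → A, Setoid.ker x = ⊤ →
      partInd μ (fun π : Setoid (Fin k) => if π = ⊥ then (1 : F) else 0) x =
        (-1 : F) ^ k * (Nat.factorial (k - 1))) ∧
    (∀ x : Fin k → A, ¬ Function.Injective x → Setoid.ker x ≠ ⊤ →
      partInd μ (fun π : Setoid (Fin k) => if π = ⊥ then (1 : F) else 0) x = 0) :=
  stmt5_general hk μ hrefl hsum
end

section
/- Let A be a finite set, F a field, P a property of k-tuples of A, T : A^k → F with T = 1 on tuples satisfying P and 0 otherwise, and f : Π_k \ {1̂} → F. Assume: (1) every constant tuple (x,...,x) satisfies P; (2) if some tuple with partition π ≠ 1̂ satisfies P, then f(π) = 0; (3) ∑_{π < 1̂} f(π)·μ(π,1̂) ≠ 0. Then the product tensor I_f · T is diagonal on A^k with nonzero diagonal entries, and consequently |A| ≤ partition-rank(I_f · T). -/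
open scoped Classical
open Finset

/-- A tensor `T : A^k → F` has partition rank 1 if it factors as a product of
tensors over the blocks of a nontrivial partition of {1,...,k}: each factor
depends only on the coordinates in its block. -/
def HasPRankOne {k : ℕ} {A F : Type*} [CommRing F] (T : (Fin k → A) → F) : Prop :=
  ∃ π : Setoid (Fin k), π ≠ ⊤ ∧ ∃ g : Quotient π → (Fin k → A) → F,
    (∀ (c : Quotient π) (x y : Fin k → A),
        (∀ i : Fin k, Quotient.mk π i = c → x i = y i) → g c x = g c y) ∧
    ∀ x, T x = ∏ c : Quotient π, g c x

/-- The partition rank of a tensor: the least r such that T is the sum of r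
tensors of partition rank 1. -/
noncomputable def partitionRank {k : ℕ} {A F : Type*} [CommRing F]
    (T : (Fin k → A) → F) : ℕ :=
  sInf {r : ℕ | ∃ c : Fin r → (Fin k → A) → F,
    (∀ i, HasPRankOne (c i)) ∧ ∀ x, T x = ∑ i, c i x}

private lemma sum_dite_sub {A : Type*} [Fintype A] {F : Type*} [Field F]
    (S : Finset A) (w : A → F) (h : ↥S → F) :
    ∑ a : A, w a * (if ha : a ∈ S then h ⟨a, ha⟩ else 0) = ∑ x : S, w x * h x := by
  classical
  calc ∑ a : A, w a * (if ha : a ∈ S then h ⟨a, ha⟩ else 0)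
      = ∑ a ∈ S, w a * (if ha : a ∈ S then h ⟨a, ha⟩ else 0) := by
        symm; apply Finset.sum_subset (Finset.subset_univ S)
        intro a _ ha; simp [ha]
    _ = ∑ x ∈ S.attach, w ↑x * (if ha : (x : A) ∈ S then h ⟨x, ha⟩ else 0) :=
        (Finset.sum_attach S _).symm
    _ = ∑ x : S, w x * h x := by
        rw [Finset.univ_eq_attach]
        apply Finset.sum_congr rfl
        intro x _; simp [x.2]

lemma exists_good_h {A : Type*} [Fintype A] {F : Type*} [Field F] {ι : Type*}
    (S : Finset A) (J : Finset ι) (v : ι → A → F) :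
    ∃ h : A → F, (∀ a ∉ S, h a = 0) ∧ (∀ i ∈ J, ∑ a, v i a * h a = 0) ∧
      S.card ≤ J.card + (S.filter (fun a => h a ≠ 0)).card := by
  classical
  set W : Submodule F (A → F) :=
    { carrier := {h | (∀ a ∉ S, h a = 0) ∧ ∀ i ∈ J, ∑ a, v i a * h a = 0}
      add_mem' := by
        rintro p q ⟨hp1, hp2⟩ ⟨hq1, hq2⟩
        refine ⟨fun a ha => by simp [hp1 a ha, hq1 a ha], fun i hi => ?_⟩
        simp only [Pi.add_apply, mul_add, Finset.sum_add_distrib, hp2 i hi, hq2 i hi, add_zero]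
      zero_mem' := by
        refine ⟨fun a _ => rfl, fun i hi => ?_⟩
        simp
      smul_mem' := by
        rintro c p ⟨hp1, hp2⟩
        refine ⟨fun a ha => by simp [hp1 a ha], fun i hi => ?_⟩
        have : ∀ a, v i a * (c • p) a = c * (v i a * p a) := by
          intro a; simp only [Pi.smul_apply, smul_eq_mul]; ring
        simp only [this, ← Finset.mul_sum, hp2 i hi, mul_zero] } with hWdef
  have memW : ∀ h : A → F, h ∈ W ↔
      (∀ a ∉ S, h a = 0) ∧ ∀ i ∈ J, ∑ a, v i a * h a = 0 := fun h => Iff.rfl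
  -- lower bound on finrank W
  have hrank : S.card ≤ J.card + Module.finrank F W := by
    set L : (S → F) →ₗ[F] (J → F) :=
      { toFun := fun h => fun i => ∑ a : S, v i a * h a
        map_add' := by
          intro p q; funext i
          simp [Pi.add_apply, mul_add, Finset.sum_add_distrib]
        map_smul' := by
          intro c p; funext i
          simp only [Pi.smul_apply, smul_eq_mul, RingHom.id_apply]
          rw [Finset.mul_sum]; apply Finset.sum_congr rfl; intro a _; ring } with hL
    set ext0 : (S → F) →ₗ[F] (A → F) :=
      { toFun := fun h a => if ha : a ∈ S then h ⟨a, ha⟩ else 0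
        map_add' := by
          intro p q; funext a
          by_cases ha : a ∈ S <;> simp [ha]
        map_smul' := by
          intro c p; funext a
          by_cases ha : a ∈ S <;> simp [ha] } with hext0
    have hext : ∀ h ∈ LinearMap.ker L, ext0 h ∈ W := by
      intro h hh
      refine ⟨fun a ha => by simp [hext0, ha], fun i hi => ?_⟩
      have h2 := congrFun (LinearMap.mem_ker.mp hh) ⟨i, hi⟩
      simp only [hL, LinearMap.coe_mk, AddHom.coe_mk, Pi.zero_apply] at h2
      show ∑ a : A, v i a * (ext0 h) a = 0
      have hrfl : ∀ a, ext0 h a = if ha : a ∈ S then h ⟨a, ha⟩ else 0 := fun a => rfl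
      simp only [hrfl]
      rw [sum_dite_sub S (v i) h]
      simpa using h2
    set em : LinearMap.ker L →ₗ[F] W :=
      LinearMap.codRestrict W (ext0.comp (LinearMap.ker L).subtype)
        (fun h => hext h.1 h.2) with hem
    have hinj : Function.Injective em := by
      intro p q hpq
      apply Subtype.ext; funext x
      have := congrFun (congrArg Subtype.val hpq) x.1
      simpa [hem, hext0, x.2] using this
    have hkerW : Module.finrank F (LinearMap.ker L) ≤ Module.finrank F W :=
      LinearMap.finrank_le_finrank_of_injective hinj
    have hrn := LinearMap.finrank_range_add_finrank_ker L
    have hdom : Module.finrank F (S → F) = S.card := by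
      rw [Module.finrank_fintype_fun_eq_card, Fintype.card_coe]
    have hrange : Module.finrank F (LinearMap.range L) ≤ J.card := by
      calc Module.finrank F (LinearMap.range L) ≤ Module.finrank F (J → F) :=
            (LinearMap.range L).finrank_le
        _ = J.card := by rw [Module.finrank_fintype_fun_eq_card, Fintype.card_coe]
    omega
  -- maximal support element
  set supp : (A → F) → Finset A := fun h => univ.filter (fun a => h a ≠ 0) with hsupp
  set 𝒮 : Finset (Finset A) := univ.powerset.filter (fun s => ∃ h ∈ W, supp h = s) with hS
  have h𝒮ne : 𝒮.Nonempty := by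
    refine ⟨∅, ?_⟩
    simp only [hS, Finset.mem_filter, Finset.mem_powerset, Finset.empty_subset, true_and]
    exact ⟨0, W.zero_mem, by simp [hsupp]⟩
  obtain ⟨s₀, hs₀mem, hs₀max⟩ := Finset.exists_max_image 𝒮 Finset.card h𝒮ne
  obtain ⟨-, h₀, h₀W, h₀supp⟩ : s₀ ⊆ univ ∧ ∃ h ∈ W, supp h = s₀ := by
    simpa [hS, Finset.mem_filter, Finset.mem_powerset] using hs₀mem
  have hmax : ∀ h ∈ W, (supp h).card ≤ s₀.card := by
    intro h hh
    apply hs₀max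
    simp only [hS, Finset.mem_filter, Finset.mem_powerset]
    exact ⟨Finset.subset_univ _, h, hh, rfl⟩
  -- finrank W ≤ card s₀
  have hfr : Module.finrank F W ≤ s₀.card := by
    by_contra hlt
    push_neg at hlt
    set ρ : W →ₗ[F] (s₀ → F) :=
      { toFun := fun w => fun a => w.1 a
        map_add' := by intro p q; funext a; rfl
        map_smul' := by intro c p; funext a; rfl } with hρ
    have hninj : ¬ Function.Injective ρ := by
      intro hinj
      have := LinearMap.finrank_le_finrank_of_injective hinj
      rw [Module.finrank_fintype_fun_eq_card, Fintype.card_coe] at this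
      omega
    rw [injective_iff_map_eq_zero ρ] at hninj
    push_neg at hninj
    obtain ⟨w, hw0, hwne⟩ := hninj
    have hwvan : ∀ a ∈ s₀, w.1 a = 0 := by
      intro a ha
      exact congrFun hw0 ⟨a, ha⟩
    have hwne' : ∃ a, w.1 a ≠ 0 := by
      by_contra hc
      push_neg at hc
      exact hwne (Subtype.ext (funext hc))
    obtain ⟨b, hbw⟩ := hwne'
    have hbns₀ : b ∉ s₀ := fun hmem => hbw (hwvan b hmem)
    have hnew : h₀ + w.1 ∈ W := W.add_mem h₀W w.2
    have hsub : insert b s₀ ⊆ supp (h₀ + w.1) := by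
      intro x hx
      simp only [hsupp, Finset.mem_filter, Finset.mem_univ, true_and, Pi.add_apply, ne_eq]
      rcases Finset.mem_insert.mp hx with rfl | hx
      · have h₀b : h₀ x = 0 := by
          by_contra hc
          apply hbns₀; rw [← h₀supp]; simp [hsupp, hc]
        rw [h₀b, zero_add]; exact hbw
      · have hx0 : h₀ x ≠ 0 := by
          have : x ∈ supp h₀ := h₀supp.symm ▸ hx
          simpa [hsupp] using this
        rw [hwvan x hx, add_zero]; exact hx0
    have hcard := Finset.card_le_card hsub
    rw [Finset.card_insert_of_notMem hbns₀] at hcard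
    have := hmax _ hnew
    omega
  refine ⟨h₀, h₀W.1, h₀W.2, ?_⟩
  have : S.filter (fun a => h₀ a ≠ 0) = s₀ := by
    rw [← h₀supp]
    apply Finset.ext
    intro a
    simp only [Finset.mem_filter, hsupp, Finset.mem_univ, true_and]
    constructor
    · rintro ⟨-, h⟩; exact h
    · intro h
      refine ⟨?_, h⟩
      by_contra hc
      exact h (h₀W.1 a hc)
  rw [this]
  omega

def Slice {k : ℕ} {A F : Type*} [CommRing F] (T : (Fin k → A) → F) : Prop :=
  ∃ (B : Set (Fin k)) (g h : (Fin k → A) → F), B.Nonempty ∧ B ≠ Set.univ ∧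
    (∀ x y, (∀ i ∈ B, x i = y i) → g x = g y) ∧
    (∀ x y, (∀ i ∉ B, x i = y i) → h x = h y) ∧
    ∀ x, T x = g x * h x

lemma ker_eq_top_iff {k : ℕ} {A : Type*} (x : Fin k → A) :
    Setoid.ker x = ⊤ ↔ ∀ i j, x i = x j := by
  rw [Setoid.eq_top_iff]
  constructor
  · intro h i j; exact Setoid.ker_def.mp (h i j)
  · intro h i j; exact Setoid.ker_def.mpr (h i j)

lemma not_slice_subsingleton {k : ℕ} (hk : k ≤ 1) {A F : Type*} [CommRing F]
    (T : (Fin k → A) → F) : ¬ Slice T := by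
  rintro ⟨B, g, h, ⟨j, hj⟩, hnu, -⟩
  apply hnu
  apply Set.eq_univ_of_forall
  intro j'
  have : Subsingleton (Fin k) := by
    interval_cases k
    · exact Fin.subsingleton_zero
    · exact Fin.subsingleton_one
  rwa [Subsingleton.elim j' j]


lemma key {A : Type*} [Fintype A] {F : Type*} [Field F] :
    ∀ (k : ℕ) {ι : Type*} (J : Finset ι) (c : ι → (Fin k → A) → F)
      (T : (Fin k → A) → F) (S : Finset A),
      (∀ i ∈ J, Slice (c i)) → (∀ x, T x = ∑ i ∈ J, c i x) →
      (∀ x, Setoid.ker x ≠ ⊤ → T x = 0) →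
      (∀ a ∈ S, T (fun _ => a) ≠ 0) → S.card ≤ J.card := by
  intro k
  induction k with
  | zero =>
    intro ι J c T S hslice hdec hdiag hnz
    rcases J.eq_empty_or_nonempty with rfl | ⟨i, hi⟩
    · have hS : S = ∅ := by
        rcases S.eq_empty_or_nonempty with rfl | ⟨a, ha⟩
        · rfl
        · exact absurd (by rw [hdec]; simp) (hnz a ha)
      simp [hS]
    · exact absurd (hslice i hi) (not_slice_subsingleton (by norm_num) _)
  | succ k ih =>
    intro ι J c T S hslice hdec hdiag hnz
    by_cases hk0 : k = 0
    · subst hk0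
      rcases J.eq_empty_or_nonempty with rfl | ⟨i, hi⟩
      · have hS : S = ∅ := by
          rcases S.eq_empty_or_nonempty with rfl | ⟨a, ha⟩
          · rfl
          · exact absurd (by rw [hdec]; simp) (hnz a ha)
        simp [hS]
      · exact absurd (hslice i hi) (not_slice_subsingleton (by norm_num) _)
    -- now k ≥ 1
    rcases S.eq_empty_or_nonempty with rfl | ⟨a0, ha0⟩
    · simp
    -- normalize the slice data so that the last coordinate is in B
    have hdata : ∀ i : ι, ∃ (B : Set (Fin (k + 1))) (gg hh : (Fin (k+1) → A) → F),
        (Fin.last k ∈ B) ∧ B ≠ Set.univ ∧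
        (∀ x y, (∀ j ∈ B, x j = y j) → gg x = gg y) ∧
        (∀ x y, (∀ j ∉ B, x j = y j) → hh x = hh y) ∧
        (i ∈ J → ∀ x, c i x = gg x * hh x) := by
      intro i
      by_cases hi : i ∈ J
      · obtain ⟨B, g, h, hne, hnu, hg, hh, hp⟩ := hslice i hi
        by_cases hl : Fin.last k ∈ B
        · exact ⟨B, g, h, hl, hnu, hg, hh, fun _ => hp⟩
        · refine ⟨Bᶜ, h, g, hl, ?_, ?_, ?_, fun _ x => by rw [hp x, mul_comm]⟩
          · intro hC
            obtain ⟨j, hj⟩ := hne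
            have : j ∈ Bᶜ := hC ▸ Set.mem_univ j
            exact this hj
          · intro x y hxy
            exact hh x y (fun j hj => hxy j hj)
          · intro x y hxy
            exact hg x y (fun j hj => hxy j (fun hc => hc hj))
      · refine ⟨{Fin.last k}, fun _ => 0, fun _ => 0, rfl, ?_, fun _ _ _ => rfl,
          fun _ _ _ => rfl, fun hc => absurd hc hi⟩
        intro hC
        have h2 : Fin.castSucc ⟨0, Nat.pos_of_ne_zero hk0⟩ ∈ ({Fin.last k} : Set (Fin (k+1))) :=
          hC ▸ Set.mem_univ _
        have h3 : Fin.castSucc ⟨0, Nat.pos_of_ne_zero hk0⟩ = Fin.last k := h2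
        exact (Fin.castSucc_lt_last _).ne h3
    choose B gg hh hlast hnu hgg hhh hprod using hdata
    set I₀ : Finset ι := J.filter (fun i => B i ⊆ {Fin.last k}) with hI₀
    set J₁ : Finset ι := J.filter (fun i => ¬ B i ⊆ {Fin.last k}) with hJ₁
    have hJcard : I₀.card + J₁.card = J.card := Finset.card_filter_add_card_filter_not _
    set v : ι → A → F := fun i a => gg i (fun _ => a) with hv
    have gv : ∀ i, B i ⊆ {Fin.last k} → ∀ z : Fin (k+1) → A, gg i z = v i (z (Fin.last k)) := by
      intro i hBi z
      apply hgg
      intro j hj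
      have : j = Fin.last k := hBi hj
      subst this; rfl
    obtain ⟨hw, hwsupp, hworth, hwcard⟩ := exists_good_h S I₀ v
    set S' : Finset A := S.filter (fun a => hw a ≠ 0) with hS'
    set T' : (Fin k → A) → F := fun x => ∑ b : A, T (Fin.snoc x b) * hw b with hT'
    set c' : ι → (Fin k → A) → F :=
      fun i x => (∑ b : A, gg i (Fin.snoc x b) * hw b) * hh i (Fin.snoc x a0) with hc'
    -- decomposition of T'
    have hdec' : ∀ x, T' x = ∑ i ∈ J₁, c' i x := by
      intro x
      have hterm : ∀ i ∈ J, ∑ b : A, c i (Fin.snoc x b) * hw b =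
          (∑ b : A, gg i (Fin.snoc x b) * hw b) * hh i (Fin.snoc x a0) := by
        intro i hi
        have hhconst : ∀ b, hh i (Fin.snoc x b) = hh i (Fin.snoc x a0) := by
          intro b
          apply hhh
          intro j hj
          have hjne : j ≠ Fin.last k := fun hje => hj (hje ▸ hlast i)
          obtain ⟨j', rfl⟩ := Fin.exists_castSucc_eq.mpr hjne
          simp [Fin.snoc_castSucc]
        rw [Finset.sum_mul]
        apply Finset.sum_congr rfl
        intro b _
        rw [hprod i hi, hhconst b]
        ring
      calc T' x = ∑ b : A, (∑ i ∈ J, c i (Fin.snoc x b)) * hw b := by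
            rw [hT']; exact Finset.sum_congr rfl (fun b _ => by rw [← hdec])
        _ = ∑ b : A, ∑ i ∈ J, c i (Fin.snoc x b) * hw b := by
            apply Finset.sum_congr rfl; intro b _; rw [Finset.sum_mul]
        _ = ∑ i ∈ J, ∑ b : A, c i (Fin.snoc x b) * hw b := Finset.sum_comm
        _ = ∑ i ∈ J, (∑ b : A, gg i (Fin.snoc x b) * hw b) * hh i (Fin.snoc x a0) :=
            Finset.sum_congr rfl hterm
        _ = (∑ i ∈ I₀, (∑ b : A, gg i (Fin.snoc x b) * hw b) * hh i (Fin.snoc x a0))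
            + ∑ i ∈ J₁, (∑ b : A, gg i (Fin.snoc x b) * hw b) * hh i (Fin.snoc x a0) :=
            (Finset.sum_filter_add_sum_filter_not J _ _).symm
        _ = ∑ i ∈ J₁, c' i x := by
            rw [hc']
            have : ∀ i ∈ I₀, (∑ b : A, gg i (Fin.snoc x b) * hw b) * hh i (Fin.snoc x a0) = 0 := by
              intro i hi
              have hBi : B i ⊆ {Fin.last k} := (Finset.mem_filter.mp hi).2
              have : ∑ b : A, gg i (Fin.snoc x b) * hw b = ∑ b : A, v i b * hw b := by
                apply Finset.sum_congr rfl
                intro b _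
                rw [gv i hBi (Fin.snoc x b), Fin.snoc_last]
              rw [this, hworth i hi, zero_mul]
            rw [Finset.sum_eq_zero this, zero_add]
    have hslice' : ∀ i ∈ J₁, Slice (c' i) := by
      intro i hi
      obtain ⟨hiJ, hns⟩ := Finset.mem_filter.mp hi
      refine ⟨{j : Fin k | Fin.castSucc j ∈ B i},
        fun x => ∑ b : A, gg i (Fin.snoc x b) * hw b,
        fun x => hh i (Fin.snoc x a0), ?_, ?_, ?_, ?_, fun x => rfl⟩
      · obtain ⟨j, hjB, hjne⟩ := Set.not_subset.mp hns
        have : j ≠ Fin.last k := hjne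
        obtain ⟨j', rfl⟩ := Fin.exists_castSucc_eq.mpr this
        exact ⟨j', hjB⟩
      · obtain ⟨j, hjB⟩ := Set.ne_univ_iff_exists_notMem _ |>.mp (hnu i)
        have hjne : j ≠ Fin.last k := fun hje => hjB (hje ▸ hlast i)
        obtain ⟨j', rfl⟩ := Fin.exists_castSucc_eq.mpr hjne
        intro hC
        exact hjB ((Set.eq_univ_iff_forall.mp hC) j')
      · intro x y hxy
        apply Finset.sum_congr rfl
        intro b _
        congr 1
        apply hgg
        intro j hj
        by_cases hjl : j = Fin.last k
        · subst hjl; simp [Fin.snoc_last]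
        · obtain ⟨j', rfl⟩ := Fin.exists_castSucc_eq.mpr hjl
          simp only [Fin.snoc_castSucc]
          exact hxy j' hj
      · intro x y hxy
        apply hhh
        intro j hj
        have hjne : j ≠ Fin.last k := fun hje => hj (hje ▸ hlast i)
        obtain ⟨j', rfl⟩ := Fin.exists_castSucc_eq.mpr hjne
        simp only [Fin.snoc_castSucc]
        exact hxy j' hj
    have hdiag' : ∀ x : Fin k → A, Setoid.ker x ≠ ⊤ → T' x = 0 := by
      intro x hx
      have hx' : ¬ ∀ i j, x i = x j := fun h => hx ((ker_eq_top_iff x).mpr h)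
      push_neg at hx'
      obtain ⟨i, j, hij⟩ := hx'
      show ∑ b : A, T (Fin.snoc x b) * hw b = 0
      apply Finset.sum_eq_zero
      intro b _
      have hker : Setoid.ker (Fin.snoc x b : Fin (k+1) → A) ≠ ⊤ := by
        intro htop
        have := (ker_eq_top_iff _).mp htop (Fin.castSucc i) (Fin.castSucc j)
        simp only [Fin.snoc_castSucc] at this
        exact hij this
      rw [hdiag _ hker, zero_mul]
    have hnz' : ∀ a ∈ S', T' (fun _ => a) ≠ 0 := by
      intro a ha
      obtain ⟨haS, hwa⟩ := Finset.mem_filter.mp ha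
      have hsnoc : (Fin.snoc (fun _ => a) a : Fin (k+1) → A) = (fun _ => a) := by
        funext j
        by_cases hjl : j = Fin.last k
        · subst hjl; simp [Fin.snoc_last]
        · obtain ⟨j', rfl⟩ := Fin.exists_castSucc_eq.mpr hjl
          simp [Fin.snoc_castSucc]
      have heq : T' (fun _ => a) = T (fun _ => a) * hw a := by
        show ∑ b : A, T (Fin.snoc (fun _ => a) b) * hw b = T (fun _ => a) * hw a
        rw [Finset.sum_eq_single a]
        · rw [hsnoc]
        · intro b _ hb
          have hker : Setoid.ker (Fin.snoc (fun _ => a) b : Fin (k+1) → A) ≠ ⊤ := by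
            intro htop
            have := (ker_eq_top_iff _).mp htop
              (Fin.castSucc ⟨0, Nat.pos_of_ne_zero hk0⟩) (Fin.last k)
            simp only [Fin.snoc_castSucc, Fin.snoc_last] at this
            exact hb this.symm
          rw [hdiag _ hker, zero_mul]
        · intro h; exact absurd (Finset.mem_univ a) h
      rw [heq]
      exact mul_ne_zero (hnz a haS) hwa
    have := ih J₁ c' T' S' hslice' hdec' hdiag' hnz'
    omega

section Moebius
variable {k : ℕ} {A F : Type*} [CommRing F]
  (μ : Setoid (Fin k) → Setoid (Fin k) → F)
  (f : Setoid (Fin k) → F)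

lemma partInd_apply_ne_top
    (hrefl : ∀ x, μ x x = 1)
    (hzero : ∀ x y, ¬ x ≤ y → μ x y = 0)
    (hsum : ∀ x y : Setoid (Fin k), x < y →
      ∑ z ∈ univ.filter (fun z => x ≤ z ∧ z ≤ y), μ x z = 0)
    (x : Fin k → A) (hx : Setoid.ker x ≠ ⊤) :
    partInd μ f x = f (Setoid.ker x) := by
  classical
  set κ := Setoid.ker x with hκdef
  have hκtop : κ < ⊤ := lt_top_iff_ne_top.mpr hx
  have hinner : ∀ π : Setoid (Fin k),
      ∑ τ ∈ univ.filter (fun τ => τ ≤ κ), μ π τ = if π = κ then 1 else 0 := by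
    intro π
    by_cases hπκ : π = κ
    · rw [if_pos hπκ, hπκ]
      rw [Finset.sum_eq_single_of_mem κ (by simp)]
      · exact hrefl κ
      · intro τ hτ hτne
        have hτκ : τ ≤ κ := (Finset.mem_filter.mp hτ).2
        apply hzero
        intro hle
        exact hτne (le_antisymm hτκ hle)
    · rw [if_neg hπκ]
      by_cases hle : π ≤ κ
      · have hltκ : π < κ := lt_of_le_of_ne hle hπκ
        have hsub : univ.filter (fun z => π ≤ z ∧ z ≤ κ) ⊆
            univ.filter (fun τ => τ ≤ κ) := by
          intro τ hτ
          simp only [Finset.mem_filter, Finset.mem_univ, true_and] at *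
          exact hτ.2
        rw [← Finset.sum_subset hsub ?_]
        · exact hsum π κ hltκ
        · intro τ hτ hτn
          apply hzero
          intro hπτ
          simp only [Finset.mem_filter, Finset.mem_univ, true_and] at hτ hτn
          exact hτn ⟨hπτ, hτ⟩
      · apply Finset.sum_eq_zero
        intro τ hτ
        apply hzero
        intro hπτ
        exact hle (le_trans hπτ (Finset.mem_filter.mp hτ).2)
  calc partInd μ f x
      = ∑ τ ∈ univ.filter (fun τ : Setoid (Fin k) => τ < ⊤),
          (if τ ≤ κ then (∑ π : Setoid (Fin k), f π * μ π τ) else 0) := by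
        unfold partInd deltaFn
        apply Finset.sum_congr rfl
        intro τ _
        rw [← hκdef]
        split <;> simp
    _ = ∑ τ ∈ (univ.filter (fun τ : Setoid (Fin k) => τ < ⊤)).filter (fun τ => τ ≤ κ),
          (∑ π : Setoid (Fin k), f π * μ π τ) := (Finset.sum_filter _ _).symm
    _ = ∑ τ ∈ univ.filter (fun τ : Setoid (Fin k) => τ ≤ κ),
          (∑ π : Setoid (Fin k), f π * μ π τ) := by
        rw [Finset.filter_filter]
        apply Finset.sum_congr _ (fun τ _ => rfl)
        apply Finset.filter_congr
        intro τ _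
        exact ⟨fun h => h.2, fun h => ⟨lt_of_le_of_lt h hκtop, h⟩⟩
    _ = ∑ π : Setoid (Fin k), ∑ τ ∈ univ.filter (fun τ => τ ≤ κ), f π * μ π τ :=
        Finset.sum_comm
    _ = ∑ π : Setoid (Fin k), f π * ∑ τ ∈ univ.filter (fun τ => τ ≤ κ), μ π τ := by
        apply Finset.sum_congr rfl
        intro π _
        rw [Finset.mul_sum]
    _ = ∑ π : Setoid (Fin k), f π * (if π = κ then 1 else 0) := by
        apply Finset.sum_congr rfl
        intro π _
        rw [hinner π]
    _ = f κ := by simp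

lemma partInd_apply_top
    (hrefl : ∀ x, μ x x = 1)
    (hzero : ∀ x y, ¬ x ≤ y → μ x y = 0)
    (hsum : ∀ x y : Setoid (Fin k), x < y →
      ∑ z ∈ univ.filter (fun z => x ≤ z ∧ z ≤ y), μ x z = 0)
    (x : Fin k → A) (hx : Setoid.ker x = ⊤) :
    partInd μ f x = - ∑ π ∈ univ.filter (fun π : Setoid (Fin k) => π < ⊤), f π * μ π ⊤ := by
  classical
  have hinner : ∀ π : Setoid (Fin k),
      ∑ τ ∈ univ.filter (fun τ : Setoid (Fin k) => τ < ⊤), μ π τ =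
        if π < ⊤ then - μ π ⊤ else 0 := by
    intro π
    by_cases hπ : π < ⊤
    · rw [if_pos hπ]
      set S1 : Finset (Setoid (Fin k)) := univ.filter (fun z => π ≤ z ∧ z ≤ ⊤) with hS1
      have htopS1 : (⊤ : Setoid (Fin k)) ∈ S1 := by simp [hS1, hπ.le]
      have h1 : ∑ τ ∈ S1.erase ⊤, μ π τ + μ π ⊤ = ∑ τ ∈ S1, μ π τ :=
        Finset.sum_erase_add S1 _ htopS1
      rw [hsum π ⊤ hπ] at h1
      have h2 : ∑ τ ∈ univ.filter (fun τ : Setoid (Fin k) => τ < ⊤), μ π τ =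
          ∑ τ ∈ S1.erase ⊤, μ π τ := by
        symm
        apply Finset.sum_subset
        · intro τ hτ
          simp only [Finset.mem_erase, hS1, Finset.mem_filter, Finset.mem_univ, true_and] at hτ ⊢
          exact lt_of_le_of_ne hτ.2.2 hτ.1
        · intro τ hτ hτn
          simp only [Finset.mem_filter, Finset.mem_univ, true_and] at hτ
          simp only [Finset.mem_erase, hS1, Finset.mem_filter, Finset.mem_univ, true_and] at hτn
          apply hzero
          intro hπτ
          exact hτn ⟨hτ.ne, hπτ, hτ.le⟩
      rw [h2]
      exact eq_neg_of_add_eq_zero_left h1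
    · rw [if_neg hπ]
      have hπtop : π = ⊤ := by
        rcases lt_or_eq_of_le (le_top : π ≤ ⊤) with h | h
        · exact absurd h hπ
        · exact h
      apply Finset.sum_eq_zero
      intro τ hτ
      apply hzero
      intro hπτ
      rw [hπtop] at hπτ
      exact (Finset.mem_filter.mp hτ).2.ne (top_le_iff.mp hπτ)
  calc partInd μ f x
      = ∑ τ ∈ univ.filter (fun τ : Setoid (Fin k) => τ < ⊤),
          (∑ π : Setoid (Fin k), f π * μ π τ) := by
        unfold partInd deltaFn
        apply Finset.sum_congr rfl
        intro τ _
        rw [hx, if_pos le_top, mul_one]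
    _ = ∑ π : Setoid (Fin k), f π *
          ∑ τ ∈ univ.filter (fun τ : Setoid (Fin k) => τ < ⊤), μ π τ := by
        rw [Finset.sum_comm]
        apply Finset.sum_congr rfl
        intro π _
        rw [Finset.mul_sum]
    _ = ∑ π : Setoid (Fin k), (if π < ⊤ then f π * (- μ π ⊤) else 0) := by
        apply Finset.sum_congr rfl
        intro π _
        rw [hinner π]
        split <;> simp
    _ = - ∑ π ∈ univ.filter (fun π : Setoid (Fin k) => π < ⊤), f π * μ π ⊤ := by
        rw [← Finset.sum_filter, ← neg_eq_iff_eq_neg, ← Finset.sum_neg_distrib]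
        apply Finset.sum_congr rfl
        intro π _
        ring

end Moebius

lemma slice_of_hasPRankOne {k : ℕ} {A F : Type*} [CommRing F] {T : (Fin k → A) → F}
    (hT : HasPRankOne T) : Slice T := by
  obtain ⟨π, hπ, g, hinv, hprod⟩ := hT
  have hab : ∃ a b : Fin k, ¬ π a b := by
    by_contra hc
    push_neg at hc
    exact hπ (Setoid.eq_top_iff.mpr hc)
  obtain ⟨a, b, hab⟩ := hab
  refine ⟨{j | π a j}, g (Quotient.mk π a),
    fun x => ∏ c ∈ univ.erase (Quotient.mk π a), g c x, ⟨a, π.refl a⟩, ?_, ?_, ?_, ?_⟩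
  · intro hC
    exact hab (Set.eq_univ_iff_forall.mp hC b)
  · intro x y hxy
    apply hinv
    intro i hi
    apply hxy
    exact π.symm (Quotient.exact hi)
  · intro x y hxy
    apply Finset.prod_congr rfl
    intro c hc
    apply hinv
    intro i hi
    apply hxy
    intro hmem
    have h2 : Quotient.mk π i = Quotient.mk π a := Quotient.sound (π.symm hmem)
    rw [hi] at h2
    exact (Finset.mem_erase.mp hc).1 h2
  · intro x
    rw [hprod x]
    exact (Finset.mul_prod_erase univ _ (Finset.mem_univ _)).symm

/-- the two-block partition {i0} vs the rest -/
def twoBlock {k : ℕ} (i0 : Fin k) : Setoid (Fin k) :=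
  ⟨fun a b => a = b ∨ (a ≠ i0 ∧ b ≠ i0),
   ⟨fun _ => Or.inl rfl,
    by
      rintro a b (rfl | ⟨h1, h2⟩)
      · exact Or.inl rfl
      · exact Or.inr ⟨h2, h1⟩,
    by
      rintro a b c (rfl | ⟨h1, h2⟩) h
      · exact h
      · rcases h with rfl | ⟨h3, h4⟩
        · exact Or.inr ⟨h1, h2⟩
        · exact Or.inr ⟨h1, h4⟩⟩⟩

lemma hasPRankOne_diagTerm {k : ℕ} (hk2 : 2 ≤ k) {A F : Type*} [CommRing F] (b : A) (d : F) :
    HasPRankOne (fun x : Fin k → A => if (∀ j, x j = b) then d else 0) := by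
  classical
  set i0 : Fin k := ⟨0, by omega⟩ with hi0
  set j1 : Fin k := ⟨1, by omega⟩ with hj1
  have hne : i0 ≠ j1 := by simp [hi0, hj1, Fin.ext_iff]
  set π : Setoid (Fin k) := twoBlock i0 with hπ
  have hrelne : ¬ π i0 j1 := by
    rintro (h | ⟨h1, h2⟩)
    · exact hne h
    · exact h1 rfl
  have hπtop : π ≠ ⊤ := fun h => hrelne (Setoid.eq_top_iff.mp h i0 j1)
  have hcl : ∀ c : Quotient π, c = Quotient.mk π i0 ∨ c = Quotient.mk π j1 := by
    intro c
    obtain ⟨j, rfl⟩ := Quotient.exists_rep c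
    by_cases hj : j = i0
    · exact Or.inl (by rw [hj])
    · refine Or.inr (Quotient.sound ?_)
      right
      refine ⟨hj, fun h => hne h.symm⟩
  have hqne : (Quotient.mk π i0) ≠ Quotient.mk π j1 := by
    intro h
    exact hrelne (Quotient.exact h)
  have huniv : (univ : Finset (Quotient π)) = {Quotient.mk π i0, Quotient.mk π j1} := by
    ext c
    simp only [Finset.mem_univ, true_iff, Finset.mem_insert, Finset.mem_singleton]
    exact hcl c
  refine ⟨π, hπtop, fun c x =>
    if c = Quotient.mk π i0 then (if x i0 = b then d else 0)
    else (if ∀ j, j ≠ i0 → x j = b then 1 else 0), ?_, ?_⟩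
  · intro c x y hxy
    beta_reduce
    by_cases hc : c = Quotient.mk π i0
    · have hx0 : x i0 = y i0 := hxy i0 hc.symm
      rw [if_pos hc, if_pos hc, hx0]
    · have hrep : ∀ j, j ≠ i0 → Quotient.mk π j = c := by
        intro j hj
        obtain ⟨rep, rfl⟩ := Quotient.exists_rep c
        have hrepne : rep ≠ i0 := fun h => hc (by rw [h])
        exact Quotient.sound (Or.inr ⟨hj, hrepne⟩)
      have hagree : ∀ j, j ≠ i0 → x j = y j := fun j hj => hxy j (hrep j hj)
      rw [if_neg hc, if_neg hc]
      have hiff : (∀ j, j ≠ i0 → x j = b) ↔ (∀ j, j ≠ i0 → y j = b) :=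
        forall_congr' fun j => imp_congr_right fun hj => by rw [hagree j hj]
      rw [if_congr hiff rfl rfl]
  · intro x
    beta_reduce
    rw [huniv, Finset.prod_pair hqne, if_pos rfl, if_neg (Ne.symm hqne)]
    by_cases hall : ∀ j, x j = b
    · rw [if_pos hall, if_pos (hall i0), if_pos (fun j _ => hall j), mul_one]
    · rw [if_neg hall]
      by_cases h0 : x i0 = b
      · rw [if_pos h0, if_neg, mul_zero]
        intro hrest
        apply hall
        intro j
        by_cases hj : j = i0
        · rw [hj]; exact h0
        · exact hrest j hj
      · rw [if_neg h0, zero_mul]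

/-- Main theorem 2: if every constant tuple satisfies P, T is the indicator of
P, f vanishes on the partition of any non-constant tuple satisfying P, and
∑_{π<⊤} f(π)μ(π,⊤) ≠ 0, then I_f·T is diagonal on A^k with nonzero diagonal
entries, and consequently |A| ≤ partition-rank(I_f·T). -/
theorem stmt9 {k : ℕ} (hk : 0 < k) {A F : Type*} [Fintype A] [Field F]
    (μ : Setoid (Fin k) → Setoid (Fin k) → F)
    (hrefl : ∀ x, μ x x = 1)
    (hzero : ∀ x y, ¬ x ≤ y → μ x y = 0)
    (hsum : ∀ x y : Setoid (Fin k), x < y →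
      ∑ z ∈ univ.filter (fun z => x ≤ z ∧ z ≤ y), μ x z = 0)
    (P : (Fin k → A) → Prop) (T : (Fin k → A) → F)
    (hT : ∀ x : Fin k → A, T x = if P x then 1 else 0)
    (f : Setoid (Fin k) → F)
    (h1 : ∀ a : A, P (fun _ => a))
    (h2 : ∀ x : Fin k → A, Setoid.ker x ≠ ⊤ → P x → f (Setoid.ker x) = 0)
    (h3 : ∑ π ∈ univ.filter (fun π : Setoid (Fin k) => π < ⊤),
        f π * μ π ⊤ ≠ 0) :
    (∀ x : Fin k → A, Setoid.ker x ≠ ⊤ → partInd μ f x * T x = 0) ∧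
    (∀ a : A, partInd μ f (fun _ => a) * T (fun _ => a) ≠ 0) ∧
    Fintype.card A ≤ partitionRank (fun x => partInd μ f x * T x) := by
  classical
  have part1 : ∀ x : Fin k → A, Setoid.ker x ≠ ⊤ → partInd μ f x * T x = 0 := by
    intro x hx
    by_cases hP : P x
    · rw [partInd_apply_ne_top μ f hrefl hzero hsum x hx, h2 x hx hP, zero_mul]
    · rw [hT x, if_neg hP, mul_zero]
  have hkerconst : ∀ a : A, Setoid.ker (fun _ : Fin k => a) = ⊤ :=
    fun a => (ker_eq_top_iff _).mpr (fun i j => rfl)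
  have part2 : ∀ a : A, partInd μ f (fun _ => a) * T (fun _ => a) ≠ 0 := by
    intro a
    rw [partInd_apply_top μ f hrefl hzero hsum _ (hkerconst a), hT, if_pos (h1 a), mul_one]
    exact neg_ne_zero.mpr h3
  refine ⟨part1, part2, ?_⟩
  by_cases hk1 : k = 1
  · exfalso
    apply h3
    apply Finset.sum_eq_zero
    intro π hπ
    exfalso
    have hlt : π < ⊤ := (Finset.mem_filter.mp hπ).2
    have hπtop : π = ⊤ := by
      apply Setoid.eq_top_iff.mpr
      intro u v
      have : u = v := by
        subst hk1
        exact Subsingleton.elim u v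
      exact this ▸ π.refl u
    exact hlt.ne hπtop
  have hk2 : 2 ≤ k := by omega
  set G : (Fin k → A) → F := fun x => partInd μ f x * T x with hG
  rcases Nat.eq_zero_or_pos (Fintype.card A) with hA | hA
  · rw [hA]; exact Nat.zero_le _
  set e : Fin (Fintype.card A) ≃ A := (Fintype.equivFin A).symm with he
  set cdec : Fin (Fintype.card A) → (Fin k → A) → F :=
    fun i x => if (∀ j, x j = e i) then G (fun _ => e i) else 0 with hcdec
  have hdecset : Fintype.card A ∈ {r : ℕ | ∃ c : Fin r → (Fin k → A) → F,
      (∀ i, HasPRankOne (c i)) ∧ ∀ x, G x = ∑ i, c i x} := by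
    refine ⟨cdec, fun i => hasPRankOne_diagTerm hk2 (e i) _, ?_⟩
    intro x
    by_cases hker : Setoid.ker x = ⊤
    · have hxconst : ∀ j, x j = x ⟨0, hk⟩ := fun j => (ker_eq_top_iff x).mp hker j ⟨0, hk⟩
      have hsingle : ∑ i, cdec i x = cdec (e.symm (x ⟨0, hk⟩)) x := by
        apply Finset.sum_eq_single
        · intro i _ hine
          show (if (∀ j, x j = e i) then G (fun _ => e i) else 0) = 0
          rw [if_neg]
          intro hall
          apply hine
          have h5 : x ⟨0, hk⟩ = e i := hall _
          rw [h5, e.symm_apply_apply]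
        · intro h; exact absurd (Finset.mem_univ _) h
      rw [hsingle]
      show G x = if (∀ j, x j = e (e.symm (x ⟨0, hk⟩))) then G (fun _ => e (e.symm (x ⟨0, hk⟩))) else 0
      rw [e.apply_symm_apply, if_pos hxconst]
      congr 1
      funext j
      exact hxconst j
    · rw [show G x = 0 from part1 x hker]
      symm
      apply Finset.sum_eq_zero
      intro i _
      show (if (∀ j, x j = e i) then G (fun _ => e i) else 0) = 0
      rw [if_neg]
      intro hall
      exact hker ((ker_eq_top_iff x).mpr (fun u v => by rw [hall u, hall v]))
  show Fintype.card A ≤ partitionRank G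
  unfold partitionRank
  apply le_csInf ⟨_, hdecset⟩
  rintro r ⟨c, hr1, hdec⟩
  have hkey := key k (univ : Finset (Fin r)) c G (univ : Finset A)
    (fun i _ => slice_of_hasPRankOne (hr1 i)) (fun x => hdec x)
    (fun x hx => part1 x hx) (fun a _ => part2 a)
  simpa using hkey
end

section
/- For positive integers n, p, m and any real x with 0 < x < 1: |{v ∈ {0,1,...,p-1}^n : ∑_{i=1}^n v_i ≤ n(p-1)/m}| ≤ ((1 - x^p) / (x^{(p-1)/m} (1 - x)))^n. -/
set_option maxHeartbeats 1000000


open scoped Classical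
open Finset

/-- For positive integers n, p, m and 0 < x < 1, the number of vectors
v ∈ {0,...,p-1}^n with ∑ v_i ≤ n(p-1)/m is at most
((1-x^p)/(x^((p-1)/m)(1-x)))^n. -/
theorem stmt13 {n p m : ℕ} (hn : 0 < n) (hp : 0 < p) (hm : 0 < m)
    (x : ℝ) (hx0 : 0 < x) (hx1 : x < 1) :
    ((univ.filter (fun v : Fin n → Fin p =>
        ((∑ i, (v i : ℕ) : ℕ) : ℝ) ≤ (n : ℝ) * ((p : ℝ) - 1) / m)).card : ℝ)
      ≤ ((1 - x ^ p) / (x ^ (((p : ℝ) - 1) / (m : ℝ)) * (1 - x))) ^ n := by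
  set c : ℝ := ((p : ℝ) - 1) / (m : ℝ) with hc
  have hxc : 0 < x ^ c := Real.rpow_pos_of_pos hx0 c
  set S := univ.filter (fun v : Fin n → Fin p =>
      ((∑ i, (v i : ℕ) : ℕ) : ℝ) ≤ (n : ℝ) * ((p : ℝ) - 1) / m) with hS
  have key : (S.card : ℝ) * (x ^ c) ^ n ≤ ((1 - x ^ p) / (1 - x)) ^ n := by
    have h1 : (S.card : ℝ) * (x ^ c) ^ n = ∑ _v ∈ S, (x ^ c) ^ n := by
      rw [Finset.sum_const, nsmul_eq_mul]
    rw [h1]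
    have h2 : ∀ v ∈ S, (x ^ c) ^ n ≤ ∏ i, x ^ ((v i : ℕ)) := by
      intro v hv
      have hvle : ((∑ i, (v i : ℕ) : ℕ) : ℝ) ≤ (n : ℝ) * c := by
        have := (Finset.mem_filter.mp hv).2
        rw [hc, mul_div_assoc] at *
        exact this
      calc (x ^ c) ^ n = x ^ ((n : ℝ) * c) := by
            rw [← Real.rpow_natCast (x ^ c) n, ← Real.rpow_mul hx0.le, mul_comm]
        _ ≤ x ^ (((∑ i, (v i : ℕ) : ℕ) : ℝ)) :=
            Real.rpow_le_rpow_of_exponent_ge hx0 hx1.le hvle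
        _ = x ^ (∑ i, (v i : ℕ)) := Real.rpow_natCast _ _
        _ = ∏ i, x ^ ((v i : ℕ)) := (Finset.prod_pow_eq_pow_sum _ _ _).symm
    calc ∑ _v ∈ S, (x ^ c) ^ n ≤ ∑ v ∈ S, ∏ i, x ^ ((v i : ℕ)) :=
          Finset.sum_le_sum h2
      _ ≤ ∑ v : Fin n → Fin p, ∏ i, x ^ ((v i : ℕ)) := by
          apply Finset.sum_le_sum_of_subset_of_nonneg (Finset.filter_subset _ _)
          intro v _ _
          exact Finset.prod_nonneg fun i _ => pow_nonneg hx0.le _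
      _ = (∑ j : Fin p, x ^ (j : ℕ)) ^ n := (Fintype.sum_pow (fun j : Fin p => x ^ (j : ℕ)) n).symm
      _ = ((1 - x ^ p) / (1 - x)) ^ n := by
          congr 1
          rw [Fin.sum_univ_eq_sum_range (fun j => x ^ j), geom_sum_eq hx1.ne]
          rw [div_eq_div_iff (by linarith) (by linarith)]
          ring
  have hrw : ((1 - x ^ p) / (x ^ c * (1 - x))) ^ n
      = ((1 - x ^ p) / (1 - x)) ^ n / (x ^ c) ^ n := by
    rw [← div_pow]
    congr 1
    field_simp
  rw [hrw, le_div_iff₀ (pow_pos hxc n)]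
  exact key
end

section
/- Fix k ≥ 3 and let q = p^ℓ with p ≥ k prime. If A ⊆ F_q^n contains no k distinct vectors x_1,...,x_k such that ⟨x_i - x_j, x_j - x_ℓ⟩ = 0 for all triples of distinct indices i, j, ℓ, then |A| = O(n^{(k+1)(q-1)}) as n → ∞ (with implied constant depending on k and q). -/
/-!
Split `A` according to the value `c = x ⬝ᵥ x`. Inside one class, a set `C` with `y ⬝ᵥ z = c` for
all `y, z ∈ C` is right-angled, since `(x - y) ⬝ᵥ (y - z) = c - c - c + c`; so such cliques have
fewer than `k` points. For each `x` choose a maximal clique `C x ∋ x`. By Fermat,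
`y ↦ ∏_{z ∈ C x} (1 - (z ⬝ᵥ y - c) ^ (q - 1))` is the indicator of `{y | ∀ z ∈ C x, z ⬝ᵥ y = c}`,
which by maximality meets the class exactly in `C x`. These functions are polynomials of degree
at most `(k - 1) (q - 1)`, a space of dimension at most `(n + 1) ^ ((k - 1) (q - 1))`. Each is
nonzero at its own `x`, so the supports of a basis extracted from them cover the class, giving at
most `(k - 1) (n + 1) ^ ((k - 1) (q - 1))` points per class.
-/

open Finset Module Submodule
open scoped Classical Pointwise

theorem Submodule.prod_mem_pow {R A ι : Type*} [CommSemiring R] [CommSemiring A] [Algebra R A]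
    (M : Submodule R A) (s : Finset ι) (f : ι → A) (hf : ∀ i ∈ s, f i ∈ M) :
    ∏ i ∈ s, f i ∈ M ^ #s := by
  have := Set.finsetProd_mem_finsetProd s (fun _ => (M : Set A)) f hf
  rw [prod_const] at this
  exact pow_subset_pow M this

theorem exists_mem_apply_ne_zero_of_mem_span {R α : Type*} [Semiring R] {s : Set (α → R)}
    {f : α → R} (hf : f ∈ span R s) {y : α} (hy : f y ≠ 0) : ∃ g ∈ s, g y ≠ 0 := by
  by_contra! h
  have hker : span R s ≤ LinearMap.ker (LinearMap.proj y) :=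
    span_le.2 fun g hg => h g hg
  exact hy (hker hf)

theorem card_le_mul_finrank_of_apply_ne_zero {F α : Type*} [Field F] (W : Submodule F (α → F))
    [FiniteDimensional F W] (S : Finset α) (g : α → α → F) (m : ℕ) (hgW : ∀ x ∈ S, g x ∈ W)
    (hself : ∀ x ∈ S, g x x ≠ 0) (hsupp : ∀ x ∈ S, #{y ∈ S | g x y ≠ 0} ≤ m) :
    #S ≤ m * finrank F W := by
  obtain ⟨b, hbg, hspan, hind⟩ := exists_linearIndependent F (g '' S)
  have hfin : b.Finite := (S.finite_toSet.image g).subset hbg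
  have hb : #hfin.toFinset ≤ finrank F W := by
    have := hfin.fintype
    calc #hfin.toFinset = finrank F (span F b) := by
          rw [finrank_span_set_eq_card hind, hfin.toFinset_eq_toFinset]
      _ ≤ finrank F W := Submodule.finrank_mono <| span_le.2 fun f hf => by
          obtain ⟨x, hx, rfl⟩ := hbg hf
          exact hgW x hx
  have hcover : S ⊆ hfin.toFinset.biUnion fun f => {y ∈ S | f y ≠ 0} := by
    intro y hy
    obtain ⟨f, hf, hfy⟩ := exists_mem_apply_ne_zero_of_mem_span
      (hspan ▸ subset_span ⟨y, hy, rfl⟩ : g y ∈ span F b) (hself y hy)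
    exact mem_biUnion.2 ⟨f, hfin.mem_toFinset.2 hf, mem_filter.2 ⟨hy, hfy⟩⟩
  calc #S ≤ ∑ f ∈ hfin.toFinset, #{y ∈ S | f y ≠ 0} :=
        (card_le_card hcover).trans card_biUnion_le
    _ ≤ ∑ _ ∈ hfin.toFinset, m := sum_le_sum fun f hf => by
          obtain ⟨x, hx, rfl⟩ := hbg (hfin.mem_toFinset.1 hf)
          exact hsupp x hx
    _ ≤ m * finrank F W := by
          rw [sum_const, smul_eq_mul, mul_comm]
          exact Nat.mul_le_mul_left m hb

theorem FiniteField.one_sub_pow_card_sub_one {K : Type*} [Field K] [Fintype K] (a : K) :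
    1 - a ^ (Fintype.card K - 1) = if a = 0 then 1 else 0 := by
  split_ifs with ha
  · rw [ha, zero_pow (Nat.sub_ne_zero_of_lt Fintype.one_lt_card), sub_zero]
  · rw [FiniteField.pow_card_sub_one_eq_one a ha, sub_self]

section FunctionSpaces

variable {F : Type*} [Field F] {n : ℕ}

variable (F n) in
/-- `affineFunctions F n ^ D` is the space of polynomial functions of degree at most `D`. -/
def affineFunctions : Submodule F ((Fin n → F) → F) :=
  span F ↑(insert 1 (univ.image fun (i : Fin n) (y : Fin n → F) => y i))

theorem one_le_affineFunctions : 1 ≤ affineFunctions F n :=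
  one_le.2 <| subset_span <| by simp

theorem dotProduct_sub_const_mem_affineFunctions (z : Fin n → F) (c : F) :
    (fun y => z ⬝ᵥ y - c) ∈ affineFunctions F n := by
  have hfun : (fun y => z ⬝ᵥ y - c) = ∑ i, z i • (fun y : Fin n → F => y i) - c • 1 := by
    ext y; simp [dotProduct]
  rw [hfun]
  exact sub_mem (sum_mem fun i _ => smul_mem _ _ (subset_span (by simp)))
    (smul_mem _ _ (subset_span (by simp)))

theorem finrank_affineFunctions_pow_le (D : ℕ) :
    finrank F ↥(affineFunctions F n ^ D) ≤ (n + 1) ^ D := by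
  rw [affineFunctions, span_pow, ← coe_pow]
  refine (finrank_span_finset_le_card _).trans (card_pow_le.trans (Nat.pow_le_pow_left ?_ D))
  exact (card_insert_le _ _).trans <| by
    simpa using card_image_le (s := univ) (f := fun (i : Fin n) (y : Fin n → F) => y i)

end FunctionSpaces

section Indicator

variable {F : Type*} [Field F] [Fintype F] {n : ℕ}

def dotIndicator (C : Finset (Fin n → F)) (c : F) : (Fin n → F) → F :=
  fun y => ∏ z ∈ C, (1 - (z ⬝ᵥ y - c) ^ (Fintype.card F - 1))

theorem dotIndicator_apply (C : Finset (Fin n → F)) (c : F) (y : Fin n → F) :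
    dotIndicator C c y = if ∀ z ∈ C, z ⬝ᵥ y = c then 1 else 0 := by
  simp only [dotIndicator, FiniteField.one_sub_pow_card_sub_one, sub_eq_zero, prod_ite_zero,
    prod_const_one]

theorem dotIndicator_mem (C : Finset (Fin n → F)) (c : F) :
    dotIndicator C c ∈ affineFunctions F n ^ (#C * (Fintype.card F - 1)) := by
  rw [pow_mul']
  have hfun : dotIndicator C c =
      ∏ z ∈ C, (1 - (fun y => z ⬝ᵥ y - c) ^ (Fintype.card F - 1)) := by
    ext y; simp [dotIndicator]
  rw [hfun]
  refine Submodule.prod_mem_pow _ C _ fun z _ =>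
    sub_mem ?_ (pow_mem_pow _ (dotProduct_sub_const_mem_affineFunctions z c) _)
  simpa using pow_mem_pow _ (one_le.1 (one_le_affineFunctions (F := F) (n := n))) _

end Indicator

section Cliques

variable {R : Type*} [CommRing R] {n k : ℕ}

def IsRightAngled (x : Fin k → Fin n → R) : Prop :=
  ∀ i j l, i ≠ j → j ≠ l → i ≠ l → (x i - x j) ⬝ᵥ (x j - x l) = 0

def IsDotClique (c : R) (C : Finset (Fin n → R)) : Prop :=
  ∀ y ∈ C, ∀ z ∈ C, y ⬝ᵥ z = c

theorem IsDotClique.isRightAngled {c : R} {C : Finset (Fin n → R)} (hC : IsDotClique c C)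
    {x : Fin k → Fin n → R} (hx : ∀ i, x i ∈ C) : IsRightAngled x := by
  intro i j l _ _ _
  simp only [sub_dotProduct, dotProduct_sub, hC _ (hx i) _ (hx j), hC _ (hx i) _ (hx l),
    hC _ (hx j) _ (hx j), hC _ (hx j) _ (hx l)]
  ring

theorem IsDotClique.card_lt {c : R} {A C : Finset (Fin n → R)}
    (hA : ¬∃ x : Fin k → Fin n → R, (∀ i, x i ∈ A) ∧ Function.Injective x ∧ IsRightAngled x)
    (hCA : C ⊆ A) (hC : IsDotClique c C) : #C < k := by
  by_contra! hkC
  let e : Fin k ↪ C := (Fin.castLEEmb hkC).trans C.equivFin.symm.toEmbedding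
  exact hA ⟨fun i => e i, fun i => hCA (e i).2, Subtype.val_injective.comp e.injective,
    hC.isRightAngled fun i => (e i).2⟩

theorem exists_isDotClique_maximal {S : Finset (Fin n → R)} {c : R}
    (hS : ∀ x ∈ S, x ⬝ᵥ x = c) {x : Fin n → R} (hx : x ∈ S) :
    ∃ C ⊆ S, x ∈ C ∧ IsDotClique c C ∧ ∀ y ∈ S, (∀ z ∈ C, z ⬝ᵥ y = c) → y ∈ C := by
  let cliques : Set (Finset (Fin n → R)) := {C | C ⊆ S ∧ x ∈ C ∧ IsDotClique c C}
  have hfin : cliques.Finite := S.powerset.finite_toSet.subset fun C hC => mem_powerset.2 hC.1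
  have hx' : {x} ∈ cliques := ⟨singleton_subset_iff.2 hx, mem_singleton_self x, by
    simpa [IsDotClique] using hS x hx⟩
  obtain ⟨C, -, hmax⟩ := hfin.exists_le_maximal hx'
  obtain ⟨hCS, hxC, hC⟩ := hmax.prop
  refine ⟨C, hCS, hxC, hC, fun y hy hyC => ?_⟩
  have hins : insert y C ∈ cliques := by
    refine ⟨insert_subset hy hCS, mem_insert_of_mem hxC, ?_⟩
    simp only [IsDotClique, mem_insert, forall_eq_or_imp]
    exact ⟨⟨hS y hy, fun z hz => dotProduct_comm y z ▸ hyC z hz⟩, fun z hz =>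
      ⟨hyC z hz, hC z hz⟩⟩
  exact hmax.2 hins (subset_insert y C) (mem_insert_self y C)

end Cliques

section Bound

variable {F : Type*} [Field F] [Fintype F] {n k : ℕ}

theorem card_le_of_isDotClique_card_lt {S : Finset (Fin n → F)} {c : F}
    (hS : ∀ x ∈ S, x ⬝ᵥ x = c) (hk : ∀ C ⊆ S, IsDotClique c C → #C < k) :
    #S ≤ (k - 1) * (n + 1) ^ ((k - 1) * (Fintype.card F - 1)) := by
  choose! C hCS hxC hC hCmax using fun x (hx : x ∈ S) => exists_isDotClique_maximal hS hx
  have hCk : ∀ x ∈ S, #(C x) ≤ k - 1 := fun x hx =>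
    Nat.le_sub_one_of_lt (hk _ (hCS x hx) (hC x hx))
  refine (card_le_mul_finrank_of_apply_ne_zero _ S (fun x => dotIndicator (C x) c) (k - 1)
    (fun x hx => ?_) (fun x hx => ?_) (fun x hx => ?_)).trans
    (Nat.mul_le_mul_left _ (finrank_affineFunctions_pow_le _))
  · exact pow_le_pow_right' (one_le_affineFunctions (F := F) (n := n))
      (Nat.mul_le_mul_right _ (hCk x hx)) (dotIndicator_mem _ _)
  · rw [dotIndicator_apply, if_pos fun z hz => hC x hx z hz x (hxC x hx)]
    exact one_ne_zero
  · refine (card_le_card fun y hy => ?_).trans (hCk x hx)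
    obtain ⟨hyS, hy0⟩ := mem_filter.1 hy
    rw [dotIndicator_apply, ne_eq, ite_eq_right_iff, not_forall] at hy0
    exact hCmax x hx y hyS hy0.1

theorem card_le_of_not_exists_isRightAngled {A : Finset (Fin n → F)}
    (hA : ¬∃ x : Fin k → Fin n → F, (∀ i, x i ∈ A) ∧ Function.Injective x ∧ IsRightAngled x) :
    #A ≤ Fintype.card F * ((k - 1) * (n + 1) ^ ((k - 1) * (Fintype.card F - 1))) := by
  rw [card_eq_sum_card_fiberwise (f := fun x => x ⬝ᵥ x) (t := univ) fun _ _ => mem_univ _]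
  calc ∑ c, #{x ∈ A | x ⬝ᵥ x = c}
      ≤ ∑ _ : F, (k - 1) * (n + 1) ^ ((k - 1) * (Fintype.card F - 1)) :=
        sum_le_sum fun c _ => card_le_of_isDotClique_card_lt (fun x hx => (mem_filter.1 hx).2)
          fun C hC hCc => hCc.card_lt hA (hC.trans (filter_subset _ _))
    _ = _ := by rw [sum_const, card_univ, smul_eq_mul]

end Bound

theorem stmt16_general {k p ℓ : ℕ} (hk : 3 ≤ k) (F : Type*) [Field F] [Fintype F]
    (hcard : Fintype.card F = p ^ ℓ) :
    ∃ C : ℝ, 0 < C ∧ ∀ n : ℕ, 1 ≤ n → ∀ A : Finset (Fin n → F),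
      (¬ ∃ x : Fin k → (Fin n → F), (∀ i, x i ∈ A) ∧ Function.Injective x ∧
        ∀ i j l : Fin k, i ≠ j → j ≠ l → i ≠ l →
          ∑ s, (x i s - x j s) * (x j s - x l s) = 0) →
      (A.card : ℝ) ≤ C * (n : ℝ) ^ ((k + 1) * (p ^ ℓ - 1)) := by
  set q := p ^ ℓ
  set D := (k - 1) * (q - 1)
  have hq : 0 < q := hcard ▸ Fintype.card_pos
  refine ⟨(q * k * 2 ^ D : ℕ), by positivity, fun n hn A hA => ?_⟩
  have hA := card_le_of_not_exists_isRightAngled hA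
  rw [hcard] at hA
  have hpow : (n + 1) ^ D ≤ 2 ^ D * n ^ ((k + 1) * (q - 1)) :=
    calc (n + 1) ^ D ≤ (2 * n) ^ D := Nat.pow_le_pow_left (by omega) D
      _ = 2 ^ D * n ^ D := mul_pow 2 n D
      _ ≤ 2 ^ D * n ^ ((k + 1) * (q - 1)) :=
        Nat.mul_le_mul_left _ (Nat.pow_le_pow_right hn (Nat.mul_le_mul_right _ (by omega)))
  calc (#A : ℝ) ≤ (q * ((k - 1) * (n + 1) ^ D) : ℕ) := by exact_mod_cast hA
    _ ≤ (q * (k * (2 ^ D * n ^ ((k + 1) * (q - 1)))) : ℕ) := by gcongr; omega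
    _ = (q * k * 2 ^ D : ℕ) * (n : ℝ) ^ ((k + 1) * (q - 1)) := by push_cast; ring

/-- Sets avoiding right-angled k-configurations: fix k ≥ 3 and q = p^ℓ with
p ≥ k prime. If A ⊆ F_q^n contains no k distinct vectors x_1,...,x_k with
⟨x_i-x_j, x_j-x_l⟩ = 0 for all triples of distinct indices, then
|A| = O(n^((k+1)(q-1))). -/
theorem stmt16 {k p ℓ : ℕ} (hk : 3 ≤ k) (hp : p.Prime) (hkp : k ≤ p)
    (hl : 0 < ℓ) (F : Type*) [Field F] [Fintype F]
    (hcard : Fintype.card F = p ^ ℓ) :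
    ∃ C : ℝ, 0 < C ∧ ∀ n : ℕ, 1 ≤ n → ∀ A : Finset (Fin n → F),
      (¬ ∃ x : Fin k → (Fin n → F), (∀ i, x i ∈ A) ∧ Function.Injective x ∧
        ∀ i j l : Fin k, i ≠ j → j ≠ l → i ≠ l →
          ∑ s, (x i s - x j s) * (x j s - x l s) = 0) →
      (A.card : ℝ) ≤ C * (n : ℝ) ^ ((k + 1) * (p ^ ℓ - 1)) :=
  stmt16_general hk F hcard
end
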